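/- There exists a constant C_1 > 0 such that for every interval ω ⊆ I with |ω| ≤ D(ω), one has sup_{x, y ∈ ω} |f''(x)/f'(y)| ≤ C_1/D(ω). -/

import Mathlib

open Real MeasureTheory Filter Set

noncomputable section

/-- The interval `I = [-1,1]`. -/
def II : Set ℝ := Set.Icc (-1) 1

/-- Length (Lebesgue measure) of a subset of `ℝ`. -/
def len (A : Set ℝ) : ℝ := (volume A).toReal

/-- `D(ω)`: the distance of the set `ω` from the critical point `0`. -/
def distCrit (ω : Set ℝ) : ℝ := sInf ((fun x : ℝ => |x|) '' ω)

/-! Since `|ω| ≤ D(ω)`, every point `z ∈ ω` satisfies `D ≤ |z| ≤ 2D`. If `D < ε₀` the power laws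
give `|f''(x)| ≲ D^(s-2)` and `f'(y) ≳ D^(s-1)`, so the ratio is `≲ 1/D`; otherwise `f''` is bounded
and `f'` is bounded below, and `D ≤ 1`. -/

open Topology

lemma abs_sub_le_len {ω : Set ℝ} (hconn : ω.OrdConnected) (hbdd : Bornology.IsBounded ω)
    {a b : ℝ} (ha : a ∈ ω) (hb : b ∈ ω) : |b - a| ≤ len ω := by
  rw [← Real.volume_real_interval]
  exact measureReal_mono (hconn.uIcc_subset ha hb) hbdd.measure_lt_top.ne

section distCrit

variable {ω : Set ℝ} {z : ℝ}

lemma distCrit_nonneg : 0 ≤ distCrit ω :=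
  Real.sInf_nonneg (by rintro _ ⟨x, -, rfl⟩; exact abs_nonneg x)

lemma distCrit_le_abs (hz : z ∈ ω) : distCrit ω ≤ |z| :=
  csInf_le ⟨0, by rintro _ ⟨x, -, rfl⟩; exact abs_nonneg x⟩ ⟨z, hz, rfl⟩

lemma abs_le_distCrit_add_len (hconn : ω.OrdConnected) (hbdd : Bornology.IsBounded ω)
    (hz : z ∈ ω) : |z| ≤ distCrit ω + len ω := by
  have : |z| - len ω ≤ distCrit ω := by
    refine le_csInf ⟨|z|, z, hz, rfl⟩ ?_
    rintro _ ⟨w, hw, rfl⟩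
    linarith [abs_sub_abs_le_abs_sub z w, abs_sub_le_len hconn hbdd hw hz]
  linarith

lemma abs_mem_Icc_distCrit (hconn : ω.OrdConnected) (hbdd : Bornology.IsBounded ω)
    (hlen : len ω ≤ distCrit ω) (hz : z ∈ ω) : |z| ∈ Icc (distCrit ω) (2 * distCrit ω) :=
  ⟨distCrit_le_abs hz, by linarith [abs_le_distCrit_add_len hconn hbdd hz]⟩

end distCrit

lemma deriv_eq_of_tendsto_deriv_nhdsGT {E : Type*} [NormedAddCommGroup E] [NormedSpace ℝ E]
    {f : ℝ → E} {a : ℝ} {e : E} (hf : DifferentiableAt ℝ f a)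
    (hdiff : ∀ᶠ x in 𝓝[>] a, DifferentiableAt ℝ f x)
    (hlim : Tendsto (deriv f) (𝓝[>] a) (𝓝 e)) : deriv f a = e := by
  have hright : HasDerivWithinAt f e (Ici a) a :=
    hasDerivWithinAt_Ici_of_tendsto_deriv (s := {x | DifferentiableAt ℝ f x})
      (fun x hx => (show DifferentiableAt ℝ f x from hx).differentiableWithinAt)
      hf.continuousAt.continuousWithinAt hdiff hlim
  exact (uniqueDiffWithinAt_Ici a).eq_deriv _ hf.hasDerivAt.hasDerivWithinAt hright

lemma deriv_eq_zero_of_deriv_pos_le_rpow {f : ℝ → ℝ} {K r δ : ℝ} (hr : 0 < r) (hδ : 0 < δ)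
    (hbound : ∀ x ∈ Ioo 0 δ, 0 < deriv f x ∧ deriv f x ≤ K * x ^ r) : deriv f 0 = 0 := by
  by_cases hf : DifferentiableAt ℝ f 0
  · have hnhds : Ioo 0 δ ∈ 𝓝[>] (0 : ℝ) := Ioo_mem_nhdsGT hδ
    refine deriv_eq_of_tendsto_deriv_nhdsGT hf (eventually_of_mem hnhds fun x hx =>
      differentiableAt_of_deriv_ne_zero (hbound x hx).1.ne') ?_
    have hpow : Tendsto (fun x : ℝ => K * x ^ r) (𝓝[>] 0) (𝓝 0) := by
      simpa [Real.zero_rpow hr.ne'] using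
        ((Real.continuousAt_rpow_const 0 r (Or.inr hr.le)).tendsto.const_mul K).mono_left
          nhdsWithin_le_nhds
    exact squeeze_zero_norm' (eventually_of_mem hnhds fun x hx =>
      (abs_of_pos (hbound x hx).1).trans_le (hbound x hx).2) hpow
  · exact deriv_zero_of_not_differentiableAt hf

lemma rpow_le_max_one_two_rpow_mul {t d r : ℝ} (hd : 0 < d) (ht : t ∈ Icc d (2 * d)) :
    t ^ r ≤ max 1 (2 ^ r) * d ^ r := by
  rcases le_total 0 r with hr | hr
  · calc t ^ r ≤ (2 * d) ^ r := Real.rpow_le_rpow (by linarith [ht.1]) ht.2 hr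
      _ = 2 ^ r * d ^ r := Real.mul_rpow zero_le_two hd.le
      _ ≤ max 1 (2 ^ r) * d ^ r := by gcongr; exact le_max_right _ _
  · calc t ^ r ≤ d ^ r := Real.rpow_le_rpow_of_nonpos hd ht.1 hr
      _ ≤ max 1 (2 ^ r) * d ^ r := le_mul_of_one_le_left (by positivity) (le_max_left _ _)

lemma abs_div_le_of_rpow_bounds {a b d t u p q K K' : ℝ} (hd : 0 < d) (ht : t ∈ Icc d (2 * d))
    (hu : d ≤ u) (hq : 0 ≤ q) (hpq : p = q - 1) (hK : 0 < K) (ha : |a| ≤ K' * t ^ p)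
    (hb : K * u ^ q ≤ b) :
    |a / b| ≤ K' * max 1 (2 ^ p) / K / d := by
  have htpos : 0 < t ^ p := Real.rpow_pos_of_pos (hd.trans_le ht.1) _
  have hK' : 0 ≤ K' := nonneg_of_mul_nonneg_left ((abs_nonneg a).trans ha) htpos
  have hnum : |a| ≤ K' * max 1 (2 ^ p) * d ^ p := by
    rw [mul_assoc]
    exact ha.trans (mul_le_mul_of_nonneg_left (rpow_le_max_one_two_rpow_mul hd ht) hK')
  have hden : K * d ^ q ≤ b :=
    (mul_le_mul_of_nonneg_left (Real.rpow_le_rpow hd.le hu hq) hK.le).trans hb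
  have hdq : 0 < K * d ^ q := by positivity
  calc |a / b| = |a| / b := by rw [abs_div, abs_of_pos (hdq.trans_le hden)]
    _ ≤ K' * max 1 (2 ^ p) * d ^ p / (K * d ^ q) := div_le_div₀ (by positivity) hnum hdq hden
    _ = K' * max 1 (2 ^ p) / K / d := by
        rw [hpq, Real.rpow_sub_one hd.ne']
        field_simp

lemma abs_div_le_div_div_of_le_one {a b B β d : ℝ} (hβ : 0 < β) (hd : 0 < d) (hd1 : d ≤ 1)
    (ha : |a| ≤ B) (hb : β ≤ b) : |a / b| ≤ B / β / d := by
  have hB : 0 ≤ B := (abs_nonneg a).trans ha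
  calc |a / b| = |a| / b := by rw [abs_div, abs_of_pos (hβ.trans_le hb)]
    _ ≤ B / β := div_le_div₀ hB ha hβ hb
    _ ≤ B / β / d := le_div_self (by positivity) hd hd1

theorem second_derivative_ratio_bound_general
    (f : ℝ → ℝ) (s ε₀ K₁ K₂ K₁' K₂' : ℝ)
    (hs : 1 < s) (hε₀ : 0 < ε₀)
    (hK₂ : 0 < K₂)
    (hnear : ∀ x : ℝ, 0 < |x| → |x| < 2 * ε₀ →
      K₂ * |x| ^ (s - 1) ≤ deriv f x ∧ deriv f x ≤ K₁ * |x| ^ (s - 1) ∧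
      K₂' * |x| ^ (s - 2) ≤ |deriv (deriv f) x| ∧
      |deriv (deriv f) x| ≤ K₁' * |x| ^ (s - 2))
    (hfar : ∃ b₁ b₂ b₃ : ℝ, 0 < b₁ ∧
      ∀ x ∈ II \ Set.Ioo (-ε₀) ε₀,
        b₁ ≤ deriv f x ∧ deriv f x ≤ b₂ ∧ |deriv (deriv f) x| ≤ b₃) :
    ∃ C₁ : ℝ, 0 < C₁ ∧
      ∀ ω : Set ℝ, ω ⊆ II → ω.OrdConnected → ω.Nonempty →
        len ω ≤ distCrit ω →
        ∀ x ∈ ω, ∀ y ∈ ω,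
          |deriv (deriv f) x / deriv f y| ≤ C₁ / distCrit ω := by
  obtain ⟨b₁, _, b₃, hb₁, hfar⟩ := hfar
  have hnear_pos : ∀ x ∈ Ioo 0 (2 * ε₀), 0 < deriv f x ∧ deriv f x ≤ K₁ * x ^ (s - 1) := by
    intro x ⟨hx0, hxε⟩
    obtain ⟨hlow, hup, -⟩ := hnear x (by rwa [abs_of_pos hx0]) (by rwa [abs_of_pos hx0])
    rw [abs_of_pos hx0] at hlow hup
    exact ⟨(mul_pos hK₂ (Real.rpow_pos_of_pos hx0 _)).trans_le hlow, hup⟩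
  -- If `D(ω) = 0` then `ω = {0}` and, as `C₁ / 0 = 0`, the claim becomes `|f''(0) / f'(0)| ≤ 0`.
  have hf'0 : deriv f 0 = 0 :=
    deriv_eq_zero_of_deriv_pos_le_rpow (sub_pos.2 hs) (by positivity) hnear_pos
  set Cnear := K₁' * max 1 (2 ^ (s - 2)) / K₂
  set Cfar := b₃ / b₁
  set C₁ := max (max Cnear Cfar) 1
  refine ⟨C₁, by positivity, ?_⟩
  intro ω hωI hconn _ hlen x hx y hy
  have hbdd : Bornology.IsBounded ω := (Metric.isBounded_Icc (-1 : ℝ) 1).subset hωI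
  have hxd := abs_mem_Icc_distCrit hconn hbdd hlen hx
  have hyd := abs_mem_Icc_distCrit hconn hbdd hlen hy
  rcases distCrit_nonneg.eq_or_lt with hd0 | hdpos
  · have hx0 : x = 0 := abs_nonpos_iff.mp (by linarith [hxd.2])
    have hy0 : y = 0 := abs_nonpos_iff.mp (by linarith [hyd.2])
    simp [hx0, hy0, hf'0, ← hd0]
  rcases lt_or_ge (distCrit ω) ε₀ with hclose | hapart
  · have hx2ε : |x| < 2 * ε₀ := by linarith [hxd.2]
    have hy2ε : |y| < 2 * ε₀ := by linarith [hyd.2]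
    calc _ ≤ Cnear / distCrit ω :=
          abs_div_le_of_rpow_bounds hdpos hxd hyd.1 (sub_nonneg.2 hs.le) (by ring) hK₂
            (hnear x (hdpos.trans_le hxd.1) hx2ε).2.2.2 (hnear y (hdpos.trans_le hyd.1) hy2ε).1
      _ ≤ C₁ / distCrit ω := by gcongr; exact (le_max_left _ _).trans (le_max_left _ _)
  · have hout : ∀ z ∈ ω, z ∈ II \ Ioo (-ε₀) ε₀ := fun z hz =>
      ⟨hωI hz, fun h => by linarith [abs_lt.2 h, distCrit_le_abs hz]⟩
    have hd1 : distCrit ω ≤ 1 := hxd.1.trans (abs_le.2 (hωI hx))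
    calc _ ≤ Cfar / distCrit ω := abs_div_le_div_div_of_le_one hb₁ hdpos hd1
          (hfar x (hout x hx)).2.2 (hfar y (hout y hy)).1
      _ ≤ C₁ / distCrit ω := by gcongr; exact (le_max_right _ _).trans (le_max_left _ _)

/-- Lemma 2.6: there is `C₁ > 0` such that for every interval `ω ⊆ I` with
`|ω| ≤ D(ω)` one has `sup_{x,y ∈ ω} |f''(x)/f'(y)| ≤ C₁/D(ω)`. -/
theorem second_derivative_ratio_bound
    (f : ℝ → ℝ) (s ε₀ K₁ K₂ K₁' K₂' : ℝ)
    (hs : 1 < s) (hε₀ : 0 < ε₀)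
    (hK₂ : 0 < K₂) (hK : K₂ ≤ K₁) (hK₂' : 0 < K₂') (hK' : K₂' ≤ K₁')
    (hsmooth : ContDiffOn ℝ 2 f (II \ {0}))
    (hpos : ∀ x ∈ II \ {0}, 0 < deriv f x)
    (hnear : ∀ x : ℝ, 0 < |x| → |x| < 2 * ε₀ →
      K₂ * |x| ^ (s - 1) ≤ deriv f x ∧ deriv f x ≤ K₁ * |x| ^ (s - 1) ∧
      K₂' * |x| ^ (s - 2) ≤ |deriv (deriv f) x| ∧
      |deriv (deriv f) x| ≤ K₁' * |x| ^ (s - 2))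
    (hfar : ∃ b₁ b₂ b₃ : ℝ, 0 < b₁ ∧
      ∀ x ∈ II \ Set.Ioo (-ε₀) ε₀,
        b₁ ≤ deriv f x ∧ deriv f x ≤ b₂ ∧ |deriv (deriv f) x| ≤ b₃) :
    ∃ C₁ : ℝ, 0 < C₁ ∧
      ∀ ω : Set ℝ, ω ⊆ II → ω.OrdConnected → ω.Nonempty →
        len ω ≤ distCrit ω →
        ∀ x ∈ ω, ∀ y ∈ ω,
          |deriv (deriv f) x / deriv f y| ≤ C₁ / distCrit ω :=
  second_derivative_ratio_bound_general f s ε₀ K₁ K₂ K₁' K₂' hs hε₀ hK₂ hnear hfar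

end
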